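/- Let P, A, B be skew-symmetric bi-vectors on ℝ³ given by P^{12}=x²y, P^{13}=-x(xz+1), P^{23}=xyz; A^{12}=-6x⁵y, A^{13}=-6x⁴(xz+1), A^{23}=-6x³y; and B^{12}=x⁵y, B^{13}=x⁴(xz+2), B^{23}=-2x³y. With the Schouten bracket component [[P,Q]]^{123} = ∑_{s=1}^3 (P^{s3}∂_s Q^{12} + Q^{s3}∂_s P^{12} + P^{s2}∂_s Q^{31} + Q^{s2}∂_s P^{31} + P^{s1}∂_s Q^{23} + Q^{s1}∂_s P^{23}), one has [[P,A]]^{123} = 36x⁶yz + 48x⁵y and [[P,B]]^{123} = -6x⁶yz - 8x⁵y. -/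

import Mathlib

/-- Partial derivative in the `i`-th coordinate direction on `ℝ³ = Fin 3 → ℝ`. -/
noncomputable def pd (i : Fin 3) (f : (Fin 3 → ℝ) → ℝ) : (Fin 3 → ℝ) → ℝ :=
  fun x => fderiv ℝ f x (Pi.single i 1)

/-- `P^{12}=x²y`, `P^{13}=-x(xz+1)`, `P^{23}=xyz`. -/
noncomputable def Pmat : (Fin 3 → ℝ) → Matrix (Fin 3) (Fin 3) ℝ := fun x =>
  !![0, x 0 ^ 2 * x 1, -(x 0 * (x 0 * x 2 + 1));
     -(x 0 ^ 2 * x 1), 0, x 0 * x 1 * x 2;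
     x 0 * (x 0 * x 2 + 1), -(x 0 * x 1 * x 2), 0]

/-- `A^{12}=-6x⁵y`, `A^{13}=-6x⁴(xz+1)`, `A^{23}=-6x³y`. -/
noncomputable def Amat : (Fin 3 → ℝ) → Matrix (Fin 3) (Fin 3) ℝ := fun x =>
  !![0, -6 * x 0 ^ 5 * x 1, -6 * x 0 ^ 4 * (x 0 * x 2 + 1);
     6 * x 0 ^ 5 * x 1, 0, -6 * x 0 ^ 3 * x 1;
     6 * x 0 ^ 4 * (x 0 * x 2 + 1), 6 * x 0 ^ 3 * x 1, 0]

/-- `B^{12}=x⁵y`, `B^{13}=x⁴(xz+2)`, `B^{23}=-2x³y`. -/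
noncomputable def Bmat : (Fin 3 → ℝ) → Matrix (Fin 3) (Fin 3) ℝ := fun x =>
  !![0, x 0 ^ 5 * x 1, x 0 ^ 4 * (x 0 * x 2 + 2);
     -(x 0 ^ 5 * x 1), 0, -2 * x 0 ^ 3 * x 1;
     -(x 0 ^ 4 * (x 0 * x 2 + 2)), 2 * x 0 ^ 3 * x 1, 0]

/-- The `(1,2,3)`-component of the Schouten bracket of two bi-vectors on `ℝ³`. -/
noncomputable def schouten123 (P Q : (Fin 3 → ℝ) → Matrix (Fin 3) (Fin 3) ℝ) :
    (Fin 3 → ℝ) → ℝ := fun x =>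
  ∑ s,
    (P x s 2 * pd s (fun y => Q y 0 1) x + Q x s 2 * pd s (fun y => P y 0 1) x +
     P x s 1 * pd s (fun y => Q y 2 0) x + Q x s 1 * pd s (fun y => P y 2 0) x +
     P x s 0 * pd s (fun y => Q y 1 2) x + Q x s 0 * pd s (fun y => P y 1 2) x)


/-! Every coefficient is a polynomial in the coordinates, so its gradient comes from the product
and power rules; substituting the nine gradients turns both components into polynomial identities. -/

theorem pd_eq_of_hasFDerivAt {f : (Fin 3 → ℝ) → ℝ} {f' : (Fin 3 → ℝ) →L[ℝ] ℝ} {x : Fin 3 → ℝ}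
    (h : HasFDerivAt f f' x) (i : Fin 3) : pd i f x = f' (Pi.single i 1) := by
  rw [pd, h.fderiv]

theorem hasFDerivAt_coord (i : Fin 3) (x : Fin 3 → ℝ) :
    HasFDerivAt (fun y : Fin 3 → ℝ => y i) (ContinuousLinearMap.proj (R := ℝ) i) x :=
  hasFDerivAt_apply i x

section Gradients

variable (s : Fin 3) (x : Fin 3 → ℝ)

theorem pd_Pmat_01 : pd s (fun y => Pmat y 0 1) x = ![2 * x 0 * x 1, x 0 ^ 2, 0] s := by
  have h := ((hasFDerivAt_coord 0 x).pow 2).fun_mul (hasFDerivAt_coord 1 x)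
  rw [pd_eq_of_hasFDerivAt (f := fun y => Pmat y 0 1) h]
  fin_cases s <;> simp
  ring

theorem pd_Pmat_20 : pd s (fun y => Pmat y 2 0) x = ![2 * x 0 * x 2 + 1, 0, x 0 ^ 2] s := by
  have h := (hasFDerivAt_coord 0 x).fun_mul
    (((hasFDerivAt_coord 0 x).fun_mul (hasFDerivAt_coord 2 x)).add_const 1)
  rw [pd_eq_of_hasFDerivAt (f := fun y => Pmat y 2 0) h]
  fin_cases s <;> simp <;> ring

theorem pd_Pmat_12 : pd s (fun y => Pmat y 1 2) x = ![x 1 * x 2, x 0 * x 2, x 0 * x 1] s := by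
  have h := ((hasFDerivAt_coord 0 x).fun_mul (hasFDerivAt_coord 1 x)).fun_mul
    (hasFDerivAt_coord 2 x)
  rw [pd_eq_of_hasFDerivAt (f := fun y => Pmat y 1 2) h]
  fin_cases s <;> simp <;> ring

theorem pd_Amat_01 :
    pd s (fun y => Amat y 0 1) x = ![-30 * x 0 ^ 4 * x 1, -6 * x 0 ^ 5, 0] s := by
  have h := (((hasFDerivAt_coord 0 x).pow 5).const_mul (-6)).fun_mul (hasFDerivAt_coord 1 x)
  rw [pd_eq_of_hasFDerivAt (f := fun y => Amat y 0 1) h]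
  fin_cases s <;> simp
  ring

theorem pd_Amat_20 :
    pd s (fun y => Amat y 2 0) x = ![30 * x 0 ^ 4 * x 2 + 24 * x 0 ^ 3, 0, 6 * x 0 ^ 5] s := by
  have h := (((hasFDerivAt_coord 0 x).pow 4).const_mul 6).fun_mul
    (((hasFDerivAt_coord 0 x).fun_mul (hasFDerivAt_coord 2 x)).add_const 1)
  rw [pd_eq_of_hasFDerivAt (f := fun y => Amat y 2 0) h]
  fin_cases s <;> simp <;> ring

theorem pd_Amat_12 :
    pd s (fun y => Amat y 1 2) x = ![-18 * x 0 ^ 2 * x 1, -6 * x 0 ^ 3, 0] s := by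
  have h := (((hasFDerivAt_coord 0 x).pow 3).const_mul (-6)).fun_mul (hasFDerivAt_coord 1 x)
  rw [pd_eq_of_hasFDerivAt (f := fun y => Amat y 1 2) h]
  fin_cases s <;> simp
  ring

theorem pd_Bmat_01 : pd s (fun y => Bmat y 0 1) x = ![5 * x 0 ^ 4 * x 1, x 0 ^ 5, 0] s := by
  have h := ((hasFDerivAt_coord 0 x).pow 5).fun_mul (hasFDerivAt_coord 1 x)
  rw [pd_eq_of_hasFDerivAt (f := fun y => Bmat y 0 1) h]
  fin_cases s <;> simp
  ring

theorem pd_Bmat_20 :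
    pd s (fun y => Bmat y 2 0) x = ![-(5 * x 0 ^ 4 * x 2 + 8 * x 0 ^ 3), 0, -x 0 ^ 5] s := by
  have h := (((hasFDerivAt_coord 0 x).pow 4).fun_mul
    (((hasFDerivAt_coord 0 x).fun_mul (hasFDerivAt_coord 2 x)).add_const 2)).fun_neg
  rw [pd_eq_of_hasFDerivAt (f := fun y => Bmat y 2 0) h]
  fin_cases s <;> simp <;> ring

theorem pd_Bmat_12 :
    pd s (fun y => Bmat y 1 2) x = ![-6 * x 0 ^ 2 * x 1, -2 * x 0 ^ 3, 0] s := by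
  have h := (((hasFDerivAt_coord 0 x).pow 3).const_mul (-2)).fun_mul (hasFDerivAt_coord 1 x)
  rw [pd_eq_of_hasFDerivAt (f := fun y => Bmat y 1 2) h]
  fin_cases s <;> simp
  ring

end Gradients

theorem schouten_components :
    ∀ x : Fin 3 → ℝ,
      schouten123 Pmat Amat x = 36 * x 0 ^ 6 * x 1 * x 2 + 48 * x 0 ^ 5 * x 1 ∧
      schouten123 Pmat Bmat x = -6 * x 0 ^ 6 * x 1 * x 2 - 8 * x 0 ^ 5 * x 1 := by
  intro x
  constructor <;>
  · simp only [schouten123, Fin.sum_univ_three, pd_Pmat_01, pd_Pmat_20, pd_Pmat_12, pd_Amat_01,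
      pd_Amat_20, pd_Amat_12, pd_Bmat_01, pd_Bmat_20, pd_Bmat_12]
    simp only [Pmat, Amat, Bmat, Matrix.of_apply, Matrix.cons_val', Matrix.cons_val,
      Matrix.cons_val_fin_one, Matrix.cons_val_zero, Matrix.cons_val_one]
    ring
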